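/- arXiv:1506.06100 — 3 statements merged into one kernel-verified Lean document; each statement's English description precedes it below -/
import Mathlib

section
/- Let p ∈ (1,2] and q be its conjugate exponent (1/p + 1/q = 1), and let f, g be nonnegative measurable functions with 0 < ‖f‖_p < ∞ and 0 < ‖g‖_q < ∞. For any ε > 0, if ‖fg‖₁ > (1-ε) ‖f‖_p ‖g‖_q, then ‖ f^p/‖f‖_p^p − fg/(‖f‖_p ‖g‖_q) ‖₁ ≤ √(2ε). -/
/-!
After normalising `f` and `g` to unit norm, `f ^ p - f g = f ^ (p/2) R` with
`R = f ^ (p/2) - f ^ (1 - p/2) g`. Cauchy–Schwarz bounds the `L¹` norm of this by `‖R‖₂`,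
and `‖R‖₂² = 1 - 2 ∫ f g + ∫ f ^ (2 - p) g²`, where the last integral is at most `1` by
Hölder's inequality with exponents `p / (2 - p)` and `q / 2`.
-/

open MeasureTheory

section Holder

variable {Z : Type*} [MeasurableSpace Z] {ν : Measure Z} {u v : Z → ℝ} {r s : ℝ}

theorem memLp_ofReal_of_integrable_rpow (hu : ∀ z, 0 ≤ u z) (hmu : AEStronglyMeasurable u ν)
    (hr : 0 < r) (h : Integrable (fun z => u z ^ r) ν) : MemLp u (ENNReal.ofReal r) ν := by
  refine (integrable_norm_rpow_iff hmu (by simpa using hr) ENNReal.ofReal_ne_top).1 ?_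
  simpa only [ENNReal.toReal_ofReal hr.le, Real.norm_of_nonneg (hu _)] using h

theorem integrable_mul_of_integrable_rpow (hu : ∀ z, 0 ≤ u z) (hv : ∀ z, 0 ≤ v z)
    (hmu : AEStronglyMeasurable u ν) (hmv : AEStronglyMeasurable v ν)
    (hrs : r.HolderConjugate s)
    (hur : Integrable (fun z => u z ^ r) ν) (hvs : Integrable (fun z => v z ^ s) ν) :
    Integrable (fun z => u z * v z) ν :=
  have := hrs.ennrealOfReal
  (memLp_ofReal_of_integrable_rpow hu hmu hrs.pos hur).integrable_mul
    (memLp_ofReal_of_integrable_rpow hv hmv hrs.symm.pos hvs)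

theorem integral_mul_le_of_integrable_rpow (hu : ∀ z, 0 ≤ u z) (hv : ∀ z, 0 ≤ v z)
    (hmu : AEStronglyMeasurable u ν) (hmv : AEStronglyMeasurable v ν)
    (hrs : r.HolderConjugate s)
    (hur : Integrable (fun z => u z ^ r) ν) (hvs : Integrable (fun z => v z ^ s) ν) :
    ∫ z, u z * v z ∂ν ≤
      (∫ z, u z ^ r ∂ν) ^ (1 / r) * (∫ z, v z ^ s ∂ν) ^ (1 / s) :=
  integral_mul_le_Lp_mul_Lq_of_nonneg hrs (ae_of_all _ hu) (ae_of_all _ hv)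
    (memLp_ofReal_of_integrable_rpow hu hmu hrs.pos hur)
    (memLp_ofReal_of_integrable_rpow hv hmv hrs.symm.pos hvs)

theorem integral_mul_le_sqrt_mul_sqrt (hu : ∀ z, 0 ≤ u z) (hv : ∀ z, 0 ≤ v z)
    (hmu : AEStronglyMeasurable u ν) (hmv : AEStronglyMeasurable v ν)
    (hu2 : Integrable (fun z => u z ^ 2) ν) (hv2 : Integrable (fun z => v z ^ 2) ν) :
    ∫ z, u z * v z ∂ν ≤ √(∫ z, u z ^ 2 ∂ν) * √(∫ z, v z ^ 2 ∂ν) := by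
  simp_rw [← Real.rpow_two, Real.sqrt_eq_rpow] at *
  exact integral_mul_le_of_integrable_rpow hu hv hmu hmv Real.HolderConjugate.two_two hu2 hv2

end Holder

section RpowAlgebra

variable {x : ℝ}

theorem sq_rpow_half (hx : 0 ≤ x) (p : ℝ) : (x ^ (p / 2)) ^ 2 = x ^ p := by
  rw [← Real.rpow_mul_natCast hx]; norm_num

theorem sq_rpow_one_sub_half (hx : 0 ≤ x) (p : ℝ) : (x ^ (1 - p / 2)) ^ 2 = x ^ (2 - p) := by
  rw [← Real.rpow_mul_natCast hx]; ring_nf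

theorem rpow_half_mul_rpow_one_sub_half (hx : 0 ≤ x) (p : ℝ) :
    x ^ (p / 2) * x ^ (1 - p / 2) = x := by
  rw [← Real.rpow_add' hx (by norm_num)]; norm_num

theorem sq_rpow_half_sub_rpow_one_sub_half_mul (hx : 0 ≤ x) (p y : ℝ) :
    (x ^ (p / 2) - x ^ (1 - p / 2) * y) ^ 2 = x ^ p - 2 * (x * y) + x ^ (2 - p) * y ^ 2 := by
  linear_combination sq_rpow_half hx p - 2 * y * rpow_half_mul_rpow_one_sub_half hx p +
    y ^ 2 * sq_rpow_one_sub_half hx p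

theorem abs_rpow_sub_mul_eq (hx : 0 ≤ x) (p y : ℝ) :
    |x ^ p - x * y| = x ^ (p / 2) * |x ^ (p / 2) - x ^ (1 - p / 2) * y| := calc
  |x ^ p - x * y| = |x ^ (p / 2) * (x ^ (p / 2) - x ^ (1 - p / 2) * y)| := by
    congr 1
    linear_combination -sq_rpow_half hx p + y * rpow_half_mul_rpow_one_sub_half hx p
  _ = _ := by rw [abs_mul, abs_of_nonneg (Real.rpow_nonneg hx _)]

theorem div_rpow_one_div_rpow (hx : 0 ≤ x) {A : ℝ} (hA : 0 ≤ A) {p : ℝ} (hp : p ≠ 0) :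
    (x / A ^ (1 / p)) ^ p = x ^ p / A := by
  rw [Real.div_rpow hx (Real.rpow_nonneg hA _), one_div, Real.rpow_inv_rpow hA hp]

end RpowAlgebra

theorem Real.HolderConjugate.div_two_sub_div_two {p q : ℝ} (hpq : p.HolderConjugate q)
    (hp2 : p < 2) : (p / (2 - p)).HolderConjugate (q / 2) := by
  have hsum := hpq.inv_add_inv_eq_one
  have hp := hpq.pos
  have hq := hpq.symm.pos
  rw [Real.holderConjugate_iff, lt_div_iff₀ (by linarith), inv_div, inv_div]
  constructor
  · linarith [hpq.lt]
  · field_simp at hsum ⊢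
    linarith

section Stability

variable {Z : Type*} [MeasurableSpace Z] {ν : Measure Z}

theorem integrable_rpow_two_sub_mul_sq_and_integral_le {F G : Z → ℝ}
    (hF : ∀ z, 0 ≤ F z) (hG : ∀ z, 0 ≤ G z) (hmF : Measurable F) (hmG : Measurable G)
    {p q : ℝ} (hp2 : p ≤ 2) (hpq : p.HolderConjugate q)
    (hFp : Integrable (fun z => F z ^ p) ν) (hGq : Integrable (fun z => G z ^ q) ν) :
    Integrable (fun z => F z ^ (2 - p) * G z ^ 2) ν ∧
      ∫ z, F z ^ (2 - p) * G z ^ 2 ∂ν ≤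
        (∫ z, F z ^ p ∂ν) ^ ((2 - p) / p) * (∫ z, G z ^ q ∂ν) ^ (2 / q) := by
  rcases hp2.eq_or_lt with rfl | hp2
  · obtain rfl : q = 2 := by rw [hpq.conjugate_eq]; norm_num
    simpa using hGq
  have hur : ∀ z, (F z ^ (2 - p)) ^ (p / (2 - p)) = F z ^ p := fun z => by
    rw [← Real.rpow_mul (hF z), mul_div_cancel₀ _ (by linarith)]
  have hvs : ∀ z, (G z ^ 2) ^ (q / 2) = G z ^ q := fun z => by
    rw [← Real.rpow_two, ← Real.rpow_mul (hG z), mul_div_cancel₀ _ two_ne_zero]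
  have hrs := hpq.div_two_sub_div_two hp2
  have hu := fun z => Real.rpow_nonneg (hF z) (2 - p)
  have hv := fun z => sq_nonneg (G z)
  have hmu := (hmF.pow_const (2 - p)).aestronglyMeasurable (μ := ν)
  have hmv := (hmG.pow_const 2).aestronglyMeasurable (μ := ν)
  have hur' : Integrable (fun z => (F z ^ (2 - p)) ^ (p / (2 - p))) ν := by simpa only [hur]
  have hvs' : Integrable (fun z => (G z ^ 2) ^ (q / 2)) ν := by simpa only [hvs]
  refine ⟨integrable_mul_of_integrable_rpow hu hv hmu hmv hrs hur' hvs', ?_⟩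
  simpa only [hur, hvs, one_div_div] using
    integral_mul_le_of_integrable_rpow hu hv hmu hmv hrs hur' hvs'

theorem integral_abs_rpow_sub_mul_le_sqrt {F G : Z → ℝ}
    (hF : ∀ z, 0 ≤ F z) (hG : ∀ z, 0 ≤ G z) (hmF : Measurable F) (hmG : Measurable G)
    {p q : ℝ} (hp2 : p ≤ 2) (hpq : p.HolderConjugate q)
    (hFp : Integrable (fun z => F z ^ p) ν) (hGq : Integrable (fun z => G z ^ q) ν)
    (hF1 : ∫ z, F z ^ p ∂ν = 1) (hG1 : ∫ z, G z ^ q ∂ν = 1) :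
    ∫ z, |F z ^ p - F z * G z| ∂ν ≤ √(2 * (1 - ∫ z, F z * G z ∂ν)) := by
  set R := fun z => F z ^ (p / 2) - F z ^ (1 - p / 2) * G z
  obtain ⟨hTint, hT⟩ :=
    integrable_rpow_two_sub_mul_sq_and_integral_le hF hG hmF hmG hp2 hpq hFp hGq
  rw [hF1, hG1, Real.one_rpow, Real.one_rpow, one_mul] at hT
  have hFG := integrable_mul_of_integrable_rpow hF hG hmF.aestronglyMeasurable
    hmG.aestronglyMeasurable hpq hFp hGq
  have hR2 : ∀ z, R z ^ 2 = F z ^ p - 2 * (F z * G z) + F z ^ (2 - p) * G z ^ 2 :=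
    fun z => sq_rpow_half_sub_rpow_one_sub_half_mul (hF z) p (G z)
  have hI : Integrable (fun z => F z ^ p - 2 * (F z * G z)) ν := hFp.sub (hFG.const_mul 2)
  have hR2int : Integrable (fun z => R z ^ 2) ν := by
    simp_rw [hR2]
    exact hI.add hTint
  have hR2le : ∫ z, R z ^ 2 ∂ν ≤ 2 * (1 - ∫ z, F z * G z ∂ν) := by
    simp_rw [hR2]
    rw [integral_add hI hTint, integral_sub hFp (hFG.const_mul 2), integral_const_mul, hF1]
    linarith
  calc ∫ z, |F z ^ p - F z * G z| ∂ν = ∫ z, F z ^ (p / 2) * |R z| ∂ν :=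
        integral_congr_ae (ae_of_all _ fun z => abs_rpow_sub_mul_eq (hF z) p (G z))
    _ ≤ √(∫ z, (F z ^ (p / 2)) ^ 2 ∂ν) * √(∫ z, |R z| ^ 2 ∂ν) := by
        refine integral_mul_le_sqrt_mul_sqrt (fun z => Real.rpow_nonneg (hF z) _)
          (fun z => abs_nonneg _) (hmF.pow_const _).aestronglyMeasurable ?_ ?_ ?_
        · exact ((hmF.pow_const _).sub ((hmF.pow_const _).mul hmG)).abs.aestronglyMeasurable
        · simpa only [sq_rpow_half (hF _)] using hFp
        · simpa only [sq_abs] using hR2int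
    _ = √(∫ z, R z ^ 2 ∂ν) := by
        simp only [sq_rpow_half (hF _), sq_abs, hF1, Real.sqrt_one, one_mul]
    _ ≤ √(2 * (1 - ∫ z, F z * G z ∂ν)) := Real.sqrt_le_sqrt hR2le

end Stability

theorem holder_stability_lemma_general
    {Z : Type*} [MeasurableSpace Z] (ν : Measure Z)
    (f g : Z → ℝ)
    (hf : ∀ z, 0 ≤ f z) (hg : ∀ z, 0 ≤ g z)
    (hmf : Measurable f) (hmg : Measurable g)
    (p q : ℝ) (hp1 : 1 < p) (hp2 : p ≤ 2) (hconj : 1 / p + 1 / q = 1)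
    (hintf : Integrable (fun z => f z ^ p) ν)
    (hintg : Integrable (fun z => g z ^ q) ν)
    (hfpos : 0 < ∫ z, f z ^ p ∂ν) (hgpos : 0 < ∫ z, g z ^ q ∂ν)
    (ε : ℝ)
    (hgap : ∫ z, f z * g z ∂ν >
      (1 - ε) * ((∫ z, f z ^ p ∂ν) ^ (1 / p) * (∫ z, g z ^ q ∂ν) ^ (1 / q))) :
    ∫ z, |f z ^ p / (∫ w, f w ^ p ∂ν) -
        f z * g z / ((∫ w, f w ^ p ∂ν) ^ (1 / p) * (∫ w, g w ^ q ∂ν) ^ (1 / q))| ∂ν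
      ≤ Real.sqrt (2 * ε) := by
  have hpq : p.HolderConjugate q :=
    Real.holderConjugate_iff.2 ⟨hp1, by simpa only [one_div] using hconj⟩
  set A := ∫ z, f z ^ p ∂ν
  set B := ∫ z, g z ^ q ∂ν
  have hc : 0 < A ^ (1 / p) := Real.rpow_pos_of_pos hfpos _
  have hd : 0 < B ^ (1 / q) := Real.rpow_pos_of_pos hgpos _
  have hFp : ∀ z, (f z / A ^ (1 / p)) ^ p = f z ^ p / A :=
    fun z => div_rpow_one_div_rpow (hf z) hfpos.le hpq.ne_zero
  have hGq : ∀ z, (g z / B ^ (1 / q)) ^ q = g z ^ q / B :=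
    fun z => div_rpow_one_div_rpow (hg z) hgpos.le hpq.symm.ne_zero
  have hFG : ∀ z, f z / A ^ (1 / p) * (g z / B ^ (1 / q)) =
      f z * g z / (A ^ (1 / p) * B ^ (1 / q)) := fun z => div_mul_div_comm _ _ _ _
  have hnormalized := integral_abs_rpow_sub_mul_le_sqrt (ν := ν)
    (fun z => div_nonneg (hf z) hc.le) (fun z => div_nonneg (hg z) hd.le)
    (hmf.div_const _) (hmg.div_const _) hp2 hpq
    (by simpa only [hFp] using hintf.div_const A) (by simpa only [hGq] using hintg.div_const B)
    (by simpa only [hFp, integral_div] using div_self hfpos.ne')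
    (by simpa only [hGq, integral_div] using div_self hgpos.ne')
  simp only [hFp, hFG, integral_div] at hnormalized
  refine hnormalized.trans (Real.sqrt_le_sqrt ?_)
  rw [gt_iff_lt, ← lt_div_iff₀ (mul_pos hc hd)] at hgap
  linarith

theorem holder_stability_lemma
    {Z : Type*} [MeasurableSpace Z] (ν : Measure Z)
    (f g : Z → ℝ)
    (hf : ∀ z, 0 ≤ f z) (hg : ∀ z, 0 ≤ g z)
    (hmf : Measurable f) (hmg : Measurable g)
    (p q : ℝ) (hp1 : 1 < p) (hp2 : p ≤ 2) (hconj : 1 / p + 1 / q = 1)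
    (hintf : Integrable (fun z => f z ^ p) ν)
    (hintg : Integrable (fun z => g z ^ q) ν)
    (hintfg : Integrable (fun z => f z * g z) ν)
    (hfpos : 0 < ∫ z, f z ^ p ∂ν) (hgpos : 0 < ∫ z, g z ^ q ∂ν)
    (ε : ℝ) (hε : 0 < ε)
    (hgap : ∫ z, f z * g z ∂ν >
      (1 - ε) * ((∫ z, f z ^ p ∂ν) ^ (1 / p) * (∫ z, g z ^ q ∂ν) ^ (1 / q))) :
    ∫ z, |f z ^ p / (∫ w, f w ^ p ∂ν) -
        f z * g z / ((∫ w, f w ^ p ∂ν) ^ (1 / p) * (∫ w, g w ^ q ∂ν) ^ (1 / q))| ∂ν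
      ≤ Real.sqrt (2 * ε) :=
  holder_stability_lemma_general ν f g hf hg hmf hmg p q hp1 hp2 hconj hintf hintg hfpos hgpos ε
    hgap
end

section
/- Let γ₁, γ₂ : Z → ℝ>0 with I* := ∫ γ₁γ₂ dν ∈ (0,∞), let α₁ ∈ (1,2] with conjugate α₂, and let Ψ : Z → ℝ>0 with ‖γ₁Ψ‖_{α₁}, ‖γ₂/Ψ‖_{α₂} ∈ (0,∞). If I* > (1-ε) ‖γ₁Ψ‖_{α₁} ‖γ₂/Ψ‖_{α₂} for some ε ∈ (0,1), then ‖ (γ₁Ψ)^{α₁}/‖γ₁Ψ‖_{α₁}^{α₁} − γ₁γ₂/I* ‖₁ < √(2ε) + ε. -/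
/-! Normalize `f = γ₁ Ψ` and `g = γ₂ / Ψ` to unit `L^p` and `L^q` norms (`p = α₁`, `q = α₂`), so
that `t = ∫ f g > 1 - ε`. Put `u = f ^ (p/2)` and `v = f ^ (1 - p/2) g`: then `u² = f ^ p`,
`u v = f g`, and for `p ≤ 2` weighted AM-GM gives `v² ≤ (2-p)/p f ^ p + 2/q g ^ q`, whence
`∫ (u - v)² ≤ 2 (1 - t)`. By Cauchy–Schwarz `∫ |f ^ p - f g| = ∫ u |u - v| ≤ √(2 (1 - t))`, and
replacing `f g` by the density `f g / t` costs another `1 - t` in `L¹`. -/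

open MeasureTheory

namespace Real

variable {a b p q : ℝ}

lemma rpow_div_two_sq (ha : 0 ≤ a) (p : ℝ) : (a ^ (p / 2)) ^ 2 = a ^ p := by
  rw [← rpow_mul_natCast ha]
  norm_num

lemma rpow_div_two_mul_rpow_one_sub (ha : 0 ≤ a) (p : ℝ) : a ^ (p / 2) * a ^ (1 - p / 2) = a := by
  rw [← rpow_add' ha (by norm_num)]
  norm_num

theorem sq_rpow_div_two_sub_le_young_gap (ha : 0 ≤ a) (hb : 0 ≤ b) (hpq : p.HolderConjugate q)
    (hp : p ≤ 2) :
    (a ^ (p / 2) - a ^ (1 - p / 2) * b) ^ 2 ≤ 2 * (a ^ p / p + b ^ q / q - a * b) := by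
  have hp0 := hpq.pos
  have hq0 := hpq.symm.pos
  have hweights : (2 - p) / p + 2 / q = 1 := by
    have := hpq.inv_add_inv_eq_one
    field_simp at this ⊢
    linarith
  -- weighted AM-GM with weights `(2 - p) / p` and `2 / q`, nonnegative since `p ≤ 2`
  have hv : (a ^ (1 - p / 2) * b) ^ 2 ≤ (2 - p) / p * a ^ p + 2 / q * b ^ q := by
    have h := geom_mean_le_arith_mean2_weighted (div_nonneg (by linarith) hp0.le)
      (by positivity) (rpow_nonneg ha p) (rpow_nonneg hb q) hweights
    rw [← rpow_mul ha, ← rpow_mul hb, mul_div_cancel₀ _ hp0.ne', mul_div_cancel₀ _ hq0.ne',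
      rpow_two] at h
    rwa [mul_pow, ← rpow_mul_natCast ha, show (1 - p / 2) * ((2 : ℕ) : ℝ) = 2 - p by
      push_cast; ring]
  have hcoef : (2 - p) / p * a ^ p = 2 * (a ^ p / p) - a ^ p := by
    field_simp
  have hexpand : (a ^ (p / 2) - a ^ (1 - p / 2) * b) ^ 2
      = a ^ p - 2 * (a * b) + (a ^ (1 - p / 2) * b) ^ 2 := by
    rw [sub_sq, rpow_div_two_sq ha, mul_assoc 2, ← mul_assoc (a ^ (p / 2)),
      rpow_div_two_mul_rpow_one_sub ha]
  rw [hexpand]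
  linear_combination hv + hcoef

end Real

section HolderStability

variable {α : Type*} [MeasurableSpace α] {μ : Measure α} {f g : α → ℝ} {p q : ℝ}

lemma integral_abs_mul_le_sqrt_mul_sqrt (hf : MemLp f 2 μ) (hg : MemLp g 2 μ) :
    ∫ x, |f x| * |g x| ∂μ ≤ √(∫ x, f x ^ 2 ∂μ) * √(∫ x, g x ^ 2 ∂μ) := by
  have h := integral_mul_norm_le_Lp_mul_Lq Real.HolderConjugate.two_two
    (by simpa using hf) (by simpa using hg)
  simpa only [Real.norm_eq_abs, Real.rpow_two, sq_abs, ← Real.sqrt_eq_rpow] using h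

lemma integrable_sq_rpow_div_two_sub (hf : 0 ≤ f) (hg : 0 ≤ g) (hfm : AEMeasurable f μ)
    (hgm : AEMeasurable g μ) (hpq : p.HolderConjugate q) (hp : p ≤ 2)
    (hfp : Integrable (fun x ↦ f x ^ p) μ) (hgq : Integrable (fun x ↦ g x ^ q) μ)
    (hfg : Integrable (fun x ↦ f x * g x) μ) :
    Integrable (fun x ↦ (f x ^ (p / 2) - f x ^ (1 - p / 2) * g x) ^ 2) μ := by
  have hdefect : Integrable (fun x ↦ f x ^ p / p + g x ^ q / q - f x * g x) μ :=
    ((hfp.div_const p).add (hgq.div_const q)).sub hfg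
  refine (hdefect.const_mul 2).mono' ?_ (.of_forall fun x ↦ ?_)
  · exact (((hfm.pow_const _).sub ((hfm.pow_const _).mul hgm)).pow_const 2).aestronglyMeasurable
  · rw [Real.norm_of_nonneg (sq_nonneg _)]
    exact Real.sq_rpow_div_two_sub_le_young_gap (hf x) (hg x) hpq hp

lemma integral_sq_rpow_div_two_sub_le (hf : 0 ≤ f) (hg : 0 ≤ g) (hfm : AEMeasurable f μ)
    (hgm : AEMeasurable g μ) (hpq : p.HolderConjugate q) (hp : p ≤ 2)
    (hfp : Integrable (fun x ↦ f x ^ p) μ) (hgq : Integrable (fun x ↦ g x ^ q) μ)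
    (hfg : Integrable (fun x ↦ f x * g x) μ) :
    ∫ x, (f x ^ (p / 2) - f x ^ (1 - p / 2) * g x) ^ 2 ∂μ
      ≤ 2 * ((∫ x, f x ^ p ∂μ) / p + (∫ x, g x ^ q ∂μ) / q - ∫ x, f x * g x ∂μ) := by
  have hsum : Integrable (fun x ↦ f x ^ p / p + g x ^ q / q) μ :=
    (hfp.div_const p).add (hgq.div_const q)
  calc _ ≤ ∫ x, 2 * (f x ^ p / p + g x ^ q / q - f x * g x) ∂μ :=
        integral_mono (integrable_sq_rpow_div_two_sub hf hg hfm hgm hpq hp hfp hgq hfg)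
          ((hsum.sub hfg).const_mul 2)
          fun x ↦ Real.sq_rpow_div_two_sub_le_young_gap (hf x) (hg x) hpq hp
    _ = _ := by
        rw [integral_const_mul, integral_sub hsum hfg,
          integral_add (hfp.div_const p) (hgq.div_const q), integral_div, integral_div]

lemma integral_sq_rpow_div_two_sub_le_of_normalized (hf : 0 ≤ f) (hg : 0 ≤ g)
    (hfm : AEMeasurable f μ) (hgm : AEMeasurable g μ) (hpq : p.HolderConjugate q) (hp : p ≤ 2)
    (hfp : Integrable (fun x ↦ f x ^ p) μ) (hgq : Integrable (fun x ↦ g x ^ q) μ)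
    (hfg : Integrable (fun x ↦ f x * g x) μ) (hf1 : ∫ x, f x ^ p ∂μ = 1)
    (hg1 : ∫ x, g x ^ q ∂μ = 1) :
    ∫ x, (f x ^ (p / 2) - f x ^ (1 - p / 2) * g x) ^ 2 ∂μ ≤ 2 * (1 - ∫ x, f x * g x ∂μ) := by
  have h := integral_sq_rpow_div_two_sub_le hf hg hfm hgm hpq hp hfp hgq hfg
  rwa [hf1, hg1, one_div, one_div, hpq.inv_add_inv_eq_one] at h

lemma integral_mul_le_one (hf : 0 ≤ f) (hg : 0 ≤ g)
    (hfm : AEMeasurable f μ) (hgm : AEMeasurable g μ) (hpq : p.HolderConjugate q) (hp : p ≤ 2)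
    (hfp : Integrable (fun x ↦ f x ^ p) μ) (hgq : Integrable (fun x ↦ g x ^ q) μ)
    (hfg : Integrable (fun x ↦ f x * g x) μ) (hf1 : ∫ x, f x ^ p ∂μ = 1)
    (hg1 : ∫ x, g x ^ q ∂μ = 1) :
    ∫ x, f x * g x ∂μ ≤ 1 := by
  have h := integral_sq_rpow_div_two_sub_le_of_normalized hf hg hfm hgm hpq hp hfp hgq hfg hf1 hg1
  have hS : 0 ≤ ∫ x, (f x ^ (p / 2) - f x ^ (1 - p / 2) * g x) ^ 2 ∂μ :=
    integral_nonneg fun x ↦ sq_nonneg _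
  linarith

theorem integral_abs_rpow_sub_mul_le_sqrt_s6 (hf : 0 ≤ f) (hg : 0 ≤ g)
    (hfm : AEMeasurable f μ) (hgm : AEMeasurable g μ) (hpq : p.HolderConjugate q) (hp : p ≤ 2)
    (hfp : Integrable (fun x ↦ f x ^ p) μ) (hgq : Integrable (fun x ↦ g x ^ q) μ)
    (hfg : Integrable (fun x ↦ f x * g x) μ) (hf1 : ∫ x, f x ^ p ∂μ = 1)
    (hg1 : ∫ x, g x ^ q ∂μ = 1) :
    ∫ x, |f x ^ p - f x * g x| ∂μ ≤ √(2 * (1 - ∫ x, f x * g x ∂μ)) := by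
  set u := fun x ↦ f x ^ (p / 2)
  set w := fun x ↦ f x ^ (p / 2) - f x ^ (1 - p / 2) * g x
  have hu2 : ∀ x, u x ^ 2 = f x ^ p := fun x ↦ Real.rpow_div_two_sq (hf x) p
  have hfactor : ∀ x, |f x ^ p - f x * g x| = |u x| * |w x| := fun x ↦ by
    rw [← abs_mul, mul_sub, ← sq, hu2, ← mul_assoc, Real.rpow_div_two_mul_rpow_one_sub (hf x)]
  have hu : MemLp u 2 μ := (memLp_two_iff_integrable_sq (hfm.pow_const _).aestronglyMeasurable).2
    (hfp.congr (.of_forall fun x ↦ (hu2 x).symm))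
  have hw : MemLp w 2 μ := (memLp_two_iff_integrable_sq
    ((hfm.pow_const _).sub ((hfm.pow_const _).mul hgm)).aestronglyMeasurable).2
    (integrable_sq_rpow_div_two_sub hf hg hfm hgm hpq hp hfp hgq hfg)
  calc ∫ x, |f x ^ p - f x * g x| ∂μ = ∫ x, |u x| * |w x| ∂μ := by simp only [hfactor]
    _ ≤ √(∫ x, u x ^ 2 ∂μ) * √(∫ x, w x ^ 2 ∂μ) := integral_abs_mul_le_sqrt_mul_sqrt hu hw
    _ ≤ √(2 * (1 - ∫ x, f x * g x ∂μ)) := by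
        simp only [hu2, hf1, Real.sqrt_one, one_mul]
        exact Real.sqrt_le_sqrt (integral_sq_rpow_div_two_sub_le_of_normalized hf hg hfm hgm
          hpq hp hfp hgq hfg hf1 hg1)

theorem integral_abs_rpow_sub_mul_div_integral_le (hf : 0 ≤ f) (hg : 0 ≤ g)
    (hfm : AEMeasurable f μ) (hgm : AEMeasurable g μ) (hpq : p.HolderConjugate q) (hp : p ≤ 2)
    (hfp : Integrable (fun x ↦ f x ^ p) μ) (hgq : Integrable (fun x ↦ g x ^ q) μ)
    (hfg : Integrable (fun x ↦ f x * g x) μ) (hf1 : ∫ x, f x ^ p ∂μ = 1)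
    (hg1 : ∫ x, g x ^ q ∂μ = 1) (ht : 0 < ∫ x, f x * g x ∂μ) :
    ∫ x, |f x ^ p - f x * g x / ∫ y, f y * g y ∂μ| ∂μ
      ≤ √(2 * (1 - ∫ x, f x * g x ∂μ)) + (1 - ∫ x, f x * g x ∂μ) := by
  set t := ∫ x, f x * g x ∂μ
  have ht1 : t ≤ 1 := integral_mul_le_one hf hg hfm hgm hpq hp hfp hgq hfg hf1 hg1
  have hrescale : ∫ x, |f x * g x - f x * g x / t| ∂μ = 1 - t := by
    have h : ∀ x, |f x * g x - f x * g x / t| = (t⁻¹ - 1) * (f x * g x) := fun x ↦ by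
      rw [abs_sub_comm, div_eq_inv_mul, ← sub_one_mul, abs_mul,
        abs_of_nonneg (mul_nonneg (hf x) (hg x)),
        abs_of_nonneg (sub_nonneg.2 (one_le_inv_iff₀.2 ⟨ht, ht1⟩))]
    simp only [h, integral_const_mul]
    change (t⁻¹ - 1) * t = 1 - t
    field_simp
  have hint₁ : Integrable (fun x ↦ |f x ^ p - f x * g x|) μ := (hfp.sub hfg).abs
  have hint₂ : Integrable (fun x ↦ |f x * g x - f x * g x / t|) μ := (hfg.sub (hfg.div_const t)).abs
  calc ∫ x, |f x ^ p - f x * g x / t| ∂μ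
      ≤ ∫ x, (|f x ^ p - f x * g x| + |f x * g x - f x * g x / t|) ∂μ :=
        integral_mono_of_nonneg (.of_forall fun x ↦ abs_nonneg _) (hint₁.add hint₂)
          (.of_forall fun x ↦ abs_sub_le _ _ _)
    _ = ∫ x, |f x ^ p - f x * g x| ∂μ + (1 - t) := by rw [integral_add hint₁ hint₂, hrescale]
    _ ≤ √(2 * (1 - t)) + (1 - t) := by
        gcongr
        exact integral_abs_rpow_sub_mul_le_sqrt_s6 hf hg hfm hgm hpq hp hfp hgq hfg hf1 hg1

lemma div_integral_rpow_one_div_rpow (hf : 0 ≤ f) (hp : p ≠ 0) (x : α) :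
    (f x / (∫ y, f y ^ p ∂μ) ^ (1 / p)) ^ p = f x ^ p / ∫ y, f y ^ p ∂μ := by
  have hA : 0 ≤ ∫ y, f y ^ p ∂μ := integral_nonneg fun y ↦ Real.rpow_nonneg (hf y) p
  rw [Real.div_rpow (hf x) (Real.rpow_nonneg hA _), ← Real.rpow_mul hA, one_div_mul_cancel hp,
    Real.rpow_one]

lemma integral_div_integral_rpow_one_div_rpow (hf : 0 ≤ f) (hp : p ≠ 0)
    (hN : 0 < (∫ y, f y ^ p ∂μ) ^ (1 / p)) :
    ∫ x, (f x / (∫ y, f y ^ p ∂μ) ^ (1 / p)) ^ p ∂μ = 1 := by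
  have hA : 0 ≤ ∫ y, f y ^ p ∂μ := integral_nonneg fun y ↦ Real.rpow_nonneg (hf y) p
  simp only [div_integral_rpow_one_div_rpow hf hp, integral_div]
  exact div_self ((Real.rpow_ne_zero hA (one_div_ne_zero hp)).1 hN.ne')

theorem integral_abs_rpow_div_integral_sub_mul_div_integral_lt {ε : ℝ} (hf : 0 ≤ f) (hg : 0 ≤ g)
    (hfm : AEMeasurable f μ) (hgm : AEMeasurable g μ) (hpq : p.HolderConjugate q) (hp : p ≤ 2)
    (hfp : Integrable (fun x ↦ f x ^ p) μ) (hgq : Integrable (fun x ↦ g x ^ q) μ)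
    (hfg : Integrable (fun x ↦ f x * g x) μ) (hNf : 0 < (∫ x, f x ^ p ∂μ) ^ (1 / p))
    (hNg : 0 < (∫ x, g x ^ q ∂μ) ^ (1 / q)) (hε : ε < 1)
    (hgap : (1 - ε) * ((∫ x, f x ^ p ∂μ) ^ (1 / p) * (∫ x, g x ^ q ∂μ) ^ (1 / q))
      < ∫ x, f x * g x ∂μ) :
    ∫ x, |f x ^ p / (∫ y, f y ^ p ∂μ) - f x * g x / ∫ y, f y * g y ∂μ| ∂μ < √(2 * ε) + ε := by
  have hFp := div_integral_rpow_one_div_rpow (μ := μ) hf hpq.ne_zero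
  have hGq := div_integral_rpow_one_div_rpow (μ := μ) hg hpq.symm.ne_zero
  set Nf := (∫ x, f x ^ p ∂μ) ^ (1 / p)
  set Ng := (∫ x, g x ^ q ∂μ) ^ (1 / q)
  have hFG : ∀ x, f x / Nf * (g x / Ng) = f x * g x / (Nf * Ng) := fun x ↦ div_mul_div_comm ..
  have ht : ∫ x, f x / Nf * (g x / Ng) ∂μ = (∫ x, f x * g x ∂μ) / (Nf * Ng) := by
    simp only [hFG, integral_div]
  have hgap' : 1 - ε < ∫ x, f x / Nf * (g x / Ng) ∂μ := by
    rwa [ht, lt_div_iff₀ (mul_pos hNf hNg)]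
  have key := integral_abs_rpow_sub_mul_div_integral_le (f := fun x ↦ f x / Nf)
    (g := fun x ↦ g x / Ng) (fun x ↦ div_nonneg (hf x) hNf.le) (fun x ↦ div_nonneg (hg x) hNg.le)
    (hfm.div_const _) (hgm.div_const _) hpq hp (by simpa only [hFp] using hfp.div_const _)
    (by simpa only [hGq] using hgq.div_const _) (by simpa only [hFG] using hfg.div_const _)
    (integral_div_integral_rpow_one_div_rpow hf hpq.ne_zero hNf)
    (integral_div_integral_rpow_one_div_rpow hg hpq.symm.ne_zero hNg) (by linarith)
  have hsame : ∀ x, (f x / Nf) ^ p - f x / Nf * (g x / Ng) / ∫ y, f y / Nf * (g y / Ng) ∂μ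
      = f x ^ p / (∫ y, f y ^ p ∂μ) - f x * g x / ∫ y, f y * g y ∂μ := fun x ↦ by
    rw [hFp, hFG, ht, div_div_div_cancel_right₀ (mul_pos hNf hNg).ne']
  simp only [hsame] at key
  calc _ ≤ _ := key
    _ < √(2 * ε) + ε := add_lt_add_of_le_of_lt (Real.sqrt_le_sqrt (by linarith)) (by linarith)

end HolderStability

theorem vh_approximation_guarantee_general
    {Z : Type*} [MeasurableSpace Z] (ν : Measure Z)
    (γ₁ γ₂ Ψ : Z → ℝ)
    (hγ₁ : ∀ z, 0 < γ₁ z) (hγ₂ : ∀ z, 0 < γ₂ z) (hΨ : ∀ z, 0 < Ψ z)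
    (hmγ₁ : Measurable γ₁) (hmγ₂ : Measurable γ₂) (hmΨ : Measurable Ψ)
    (α₁ α₂ : ℝ) (hα₁1 : 1 < α₁) (hα₁2 : α₁ ≤ 2) (hconj : 1 / α₁ + 1 / α₂ = 1)
    (hint : Integrable (fun z => γ₁ z * γ₂ z) ν)
    (hint₁ : Integrable (fun z => (γ₁ z * Ψ z) ^ α₁) ν)
    (hint₂ : Integrable (fun z => (γ₂ z / Ψ z) ^ α₂) ν)
    (hN₁pos : 0 < (∫ z, (γ₁ z * Ψ z) ^ α₁ ∂ν) ^ (1 / α₁))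
    (hN₂pos : 0 < (∫ z, (γ₂ z / Ψ z) ^ α₂ ∂ν) ^ (1 / α₂))
    (ε : ℝ) (hε1 : ε < 1)
    (hgap : ∫ z, γ₁ z * γ₂ z ∂ν >
      (1 - ε) * ((∫ z, (γ₁ z * Ψ z) ^ α₁ ∂ν) ^ (1 / α₁) *
        (∫ z, (γ₂ z / Ψ z) ^ α₂ ∂ν) ^ (1 / α₂))) :
    ∫ z, |(γ₁ z * Ψ z) ^ α₁ / (∫ w, (γ₁ w * Ψ w) ^ α₁ ∂ν) -
        γ₁ z * γ₂ z / (∫ w, γ₁ w * γ₂ w ∂ν)| ∂ν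
      < Real.sqrt (2 * ε) + ε := by
  have hpq : α₁.HolderConjugate α₂ :=
    Real.holderConjugate_iff.2 ⟨hα₁1, by simpa only [one_div] using hconj⟩
  have hprod : ∀ z, γ₁ z * Ψ z * (γ₂ z / Ψ z) = γ₁ z * γ₂ z := fun z ↦ by
    field_simp [(hΨ z).ne']
  have h := integral_abs_rpow_div_integral_sub_mul_div_integral_lt
    (f := fun z ↦ γ₁ z * Ψ z) (g := fun z ↦ γ₂ z / Ψ z)
    (fun z ↦ (mul_pos (hγ₁ z) (hΨ z)).le) (fun z ↦ (div_pos (hγ₂ z) (hΨ z)).le)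
    (hmγ₁.mul hmΨ).aemeasurable (hmγ₂.div hmΨ).aemeasurable hpq hα₁2 hint₁ hint₂
    (by simpa only [hprod] using hint) hN₁pos hN₂pos hε1 (by simpa only [hprod] using hgap)
  simpa only [hprod] using h

theorem vh_approximation_guarantee
    {Z : Type*} [MeasurableSpace Z] (ν : Measure Z)
    (γ₁ γ₂ Ψ : Z → ℝ)
    (hγ₁ : ∀ z, 0 < γ₁ z) (hγ₂ : ∀ z, 0 < γ₂ z) (hΨ : ∀ z, 0 < Ψ z)
    (hmγ₁ : Measurable γ₁) (hmγ₂ : Measurable γ₂) (hmΨ : Measurable Ψ)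
    (α₁ α₂ : ℝ) (hα₁1 : 1 < α₁) (hα₁2 : α₁ ≤ 2) (hconj : 1 / α₁ + 1 / α₂ = 1)
    (hint : Integrable (fun z => γ₁ z * γ₂ z) ν)
    (hint₁ : Integrable (fun z => (γ₁ z * Ψ z) ^ α₁) ν)
    (hint₂ : Integrable (fun z => (γ₂ z / Ψ z) ^ α₂) ν)
    (hIpos : 0 < ∫ z, γ₁ z * γ₂ z ∂ν)
    (hN₁pos : 0 < (∫ z, (γ₁ z * Ψ z) ^ α₁ ∂ν) ^ (1 / α₁))
    (hN₂pos : 0 < (∫ z, (γ₂ z / Ψ z) ^ α₂ ∂ν) ^ (1 / α₂))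
    (ε : ℝ) (hε0 : 0 < ε) (hε1 : ε < 1)
    (hgap : ∫ z, γ₁ z * γ₂ z ∂ν >
      (1 - ε) * ((∫ z, (γ₁ z * Ψ z) ^ α₁ ∂ν) ^ (1 / α₁) *
        (∫ z, (γ₂ z / Ψ z) ^ α₂ ∂ν) ^ (1 / α₂))) :
    ∫ z, |(γ₁ z * Ψ z) ^ α₁ / (∫ w, (γ₁ w * Ψ w) ^ α₁ ∂ν) -
        γ₁ z * γ₂ z / (∫ w, γ₁ w * γ₂ w ∂ν)| ∂ν
      < Real.sqrt (2 * ε) + ε :=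
  vh_approximation_guarantee_general ν γ₁ γ₂ Ψ hγ₁ hγ₂ hΨ hmγ₁ hmγ₂ hmΨ α₁ α₂ hα₁1 hα₁2 hconj hint
    hint₁ hint₂ hN₁pos hN₂pos ε hε1 hgap
end

section
/- Let f₁,…,f_K : Z → ℝ≥0 be measurable, Ψ₁,…,Ψ_K : Z → ℝ>0, and α₁,…,α_K > 0 with Σ_{k=1}^K 1/α_k = 1. Then, whenever all integrals are defined, ∫ ∏_{k=1}^K f_k dν ≤ ∏_{k=1}^K ( ∫ (f_k/Ψ_k)^{α_k} · ∏_{k'=1}^K Ψ_{k'} dν )^{1/α_k}. -/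
open MeasureTheory

theorem generalized_variational_holder
    {Z : Type*} [MeasurableSpace Z] (ν : Measure Z)
    (K : ℕ) (hK : 2 ≤ K)
    (f : Fin K → Z → ℝ) (Ψ : Fin K → Z → ℝ) (α : Fin K → ℝ)
    (hf : ∀ k z, 0 ≤ f k z) (hmf : ∀ k, Measurable (f k))
    (hΨ : ∀ k z, 0 < Ψ k z) (hmΨ : ∀ k, Measurable (Ψ k))
    (hα : ∀ k, 0 < α k) (hconj : ∑ k, 1 / α k = 1)
    (hint : Integrable (fun z => ∏ k, f k z) ν)
    (hintk : ∀ k, Integrable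
      (fun z => (f k z / Ψ k z) ^ α k * ∏ k', Ψ k' z) ν) :
    ∫ z, ∏ k, f k z ∂ν ≤
      ∏ k, (∫ z, (f k z / Ψ k z) ^ α k * ∏ k', Ψ k' z ∂ν) ^ (1 / α k) := by
  set g : Fin K → Z → ℝ := fun k z => (f k z / Ψ k z) ^ α k * ∏ k', Ψ k' z with hg
  have hgnn : ∀ k z, 0 ≤ g k z := fun k z =>
    mul_nonneg (Real.rpow_nonneg (div_nonneg (hf k z) (hΨ k z).le) _)
      (Finset.prod_nonneg fun k' _ => (hΨ k' z).le)
  have hmg : ∀ k, Measurable (g k) := by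
    intro k
    have h1 : Measurable (f k) := hmf k
    have h2 : Measurable (Ψ k) := hmΨ k
    have h3 : Measurable (fun z => ∏ k', Ψ k' z) :=
      Finset.measurable_prod _ fun k' _ => hmΨ k'
    fun_prop
  -- pointwise identity: ∏ k, (g k z) ^ (1/α k) = ∏ k, f k z
  have hpt : ∀ z, ∏ k, (g k z) ^ (1 / α k) = ∏ k, f k z := by
    intro z
    have hP : (0:ℝ) < ∏ k', Ψ k' z := Finset.prod_pos fun k' _ => hΨ k' z
    have h1 : ∀ k : Fin K, (g k z) ^ (1 / α k)
        = (f k z / Ψ k z) * (∏ k', Ψ k' z) ^ (1 / α k) := by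
      intro k
      rw [hg]
      rw [Real.mul_rpow (Real.rpow_nonneg (div_nonneg (hf k z) (hΨ k z).le) _) hP.le]
      congr 1
      rw [← Real.rpow_mul (div_nonneg (hf k z) (hΨ k z).le),
        mul_one_div, div_self (hα k).ne', Real.rpow_one]
    simp_rw [h1]
    rw [Finset.prod_mul_distrib, Finset.prod_div_distrib,
      ← Real.rpow_sum_of_pos hP, hconj, Real.rpow_one,
      div_mul_cancel₀ _ hP.ne']
  -- move to lintegrals
  have hofg : ∀ k, ENNReal.ofReal (∫ z, g k z ∂ν) = ∫⁻ z, ENNReal.ofReal (g k z) ∂ν :=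
    fun k => ofReal_integral_eq_lintegral_ofReal (hintk k)
      (Filter.Eventually.of_forall fun z => hgnn k z)
  have hofF : ENNReal.ofReal (∫ z, ∏ k, f k z ∂ν)
      = ∫⁻ z, ENNReal.ofReal (∏ k, f k z) ∂ν :=
    ofReal_integral_eq_lintegral_ofReal hint
      (Filter.Eventually.of_forall fun z => Finset.prod_nonneg fun k _ => hf k z)
  have key : (∫⁻ z, ENNReal.ofReal (∏ k, f k z) ∂ν)
      ≤ ∏ k, (∫⁻ z, ENNReal.ofReal (g k z) ∂ν) ^ (1 / α k) := by
    have hmain := ENNReal.lintegral_prod_norm_pow_le (μ := ν) Finset.univ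
      (f := fun k z => ENNReal.ofReal (g k z))
      (fun k _ => ((hmg k).ennreal_ofReal).aemeasurable)
      (p := fun k => 1 / α k) hconj (fun k _ => one_div_nonneg.mpr (hα k).le)
    refine le_trans (le_of_eq ?_) hmain
    refine lintegral_congr fun z => ?_
    rw [← hpt z, ENNReal.ofReal_prod_of_nonneg
      (fun k _ => Real.rpow_nonneg (hgnn k z) _)]
    exact Finset.prod_congr rfl fun k _ =>
      (ENNReal.ofReal_rpow_of_nonneg (hgnn k z) (one_div_nonneg.mpr (hα k).le)).symm
  have hrhs_nn : (0:ℝ) ≤ ∏ k, (∫ z, g k z ∂ν) ^ (1 / α k) :=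
    Finset.prod_nonneg fun k _ => Real.rpow_nonneg
      (integral_nonneg fun z => hgnn k z) _
  rw [← ENNReal.ofReal_le_ofReal_iff hrhs_nn, hofF]
  refine key.trans (le_of_eq ?_)
  rw [ENNReal.ofReal_prod_of_nonneg
    (fun k _ => Real.rpow_nonneg (integral_nonneg fun z => hgnn k z) _)]
  exact Finset.prod_congr rfl fun k _ => by
    rw [← hofg k, ENNReal.ofReal_rpow_of_nonneg (integral_nonneg fun z => hgnn k z)
      (one_div_nonneg.mpr (hα k).le)]
end
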